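/- arXiv:2012.00611 — 5 statements merged into one kernel-verified Lean document; each statement's English description precedes it below -/
import Mathlib

section
/- Let H be a Hilbert space and T : H → H a bounded linear operator with ‖T‖ ≤ 1 (non-expansive). Let Π denote the orthogonal projection of H onto the closed subspace ker(I − T). Then the following are equivalent: (a) for every x ∈ H, ‖T^{k+1}x − T^{k}x‖ → 0 as k → ∞ (T is asymptotically regular); (b) for every x ∈ H, the sequence T^{k}x converges in norm to Πx as k → ∞. -/
/-!
A vector `v` orthogonal to the range of `1 - T` satisfies `⟪T v, v⟫ = ‖v‖²`, and `‖T v‖ ≤ ‖v‖`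
forces `T v = v`; hence `ker (1 - T)ᗮ ⊆ closure (range (1 - T))`. Asymptotic regularity says
exactly that `T ^ k → 0` on `range (1 - T)`, and this passes to the closure because the powers of
`T` are uniformly `1`-Lipschitz. Conversely `T ^ (k + 1) x` and `T ^ k x` have the same limit.
-/

open Filter Topology

namespace ContinuousLinearMap

section NormedSpace

variable {𝕜 E : Type*} [NontriviallyNormedField 𝕜] [NormedAddCommGroup E] [NormedSpace 𝕜 E]

theorem lipschitzWith_one_pow {T : E →L[𝕜] E} (hT : ‖T‖ ≤ 1) (k : ℕ) :
    LipschitzWith 1 (T ^ k) := by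
  have hT1 : LipschitzWith 1 T := lipschitzWith_of_opNorm_le (by simpa using hT)
  simpa [FunLike.coe_pow_eq_iterate] using hT1.iterate k

theorem pow_apply_eq_self_of_mem_ker_one_sub {T : E →L[𝕜] E} {x : E}
    (hx : x ∈ LinearMap.ker ((1 - T : E →L[𝕜] E) : E →ₗ[𝕜] E)) (k : ℕ) : (T ^ k) x = x := by
  have hTx : T x = x := (sub_eq_zero.mp (LinearMap.mem_ker.mp hx)).symm
  rw [FunLike.coe_pow_eq_iterate]
  exact Function.iterate_fixed hTx k

theorem isClosed_setOf_tendsto_pow_apply_zero {T : E →L[𝕜] E} (hT : ‖T‖ ≤ 1) :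
    IsClosed {x : E | Tendsto (fun k : ℕ => (T ^ k) x) atTop (𝓝 0)} :=
  (LipschitzWith.uniformEquicontinuous _ 1 (lipschitzWith_one_pow hT)).equicontinuous
    |>.isClosed_setOfPred_tendsto continuous_const

theorem tendsto_pow_apply_sub_self_apply_zero (T : E →L[𝕜] E) {x : E}
    (hx : Tendsto (fun k : ℕ => ‖(T ^ (k + 1)) x - (T ^ k) x‖) atTop (𝓝 0)) :
    Tendsto (fun k : ℕ => (T ^ k) (x - T x)) atTop (𝓝 0) := by
  have hpow : ∀ k : ℕ, ‖(T ^ k) (x - T x)‖ = ‖(T ^ (k + 1)) x - (T ^ k) x‖ := fun k => by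
    rw [norm_sub_rev, map_sub, pow_succ]
    rfl
  rw [tendsto_zero_iff_norm_tendsto_zero]
  simpa only [hpow] using hx

theorem tendsto_pow_apply_zero_of_mem_closure_range_one_sub {T : E →L[𝕜] E} (hT : ‖T‖ ≤ 1)
    (hreg : ∀ x : E, Tendsto (fun k : ℕ => ‖(T ^ (k + 1)) x - (T ^ k) x‖) atTop (𝓝 0)) {y : E}
    (hy : y ∈ closure (LinearMap.range ((1 - T : E →L[𝕜] E) : E →ₗ[𝕜] E) : Set E)) :
    Tendsto (fun k : ℕ => (T ^ k) y) atTop (𝓝 0) := by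
  refine closure_minimal ?_ (isClosed_setOf_tendsto_pow_apply_zero hT) hy
  rintro _ ⟨x, rfl⟩
  exact T.tendsto_pow_apply_sub_self_apply_zero (hreg x)

end NormedSpace

section InnerProductSpace

variable {𝕜 E : Type*} [RCLike 𝕜] [NormedAddCommGroup E] [InnerProductSpace 𝕜 E]

theorem orthogonal_range_one_sub_le_ker_one_sub {T : E →L[𝕜] E} (hT : ‖T‖ ≤ 1) :
    (LinearMap.range ((1 - T : E →L[𝕜] E) : E →ₗ[𝕜] E))ᗮ ≤
      LinearMap.ker ((1 - T : E →L[𝕜] E) : E →ₗ[𝕜] E) := by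
  intro v hv
  have hinner : ∀ y : E, inner 𝕜 y v = inner 𝕜 (T y) v := by
    simpa [Submodule.mem_orthogonal, inner_sub_left, sub_eq_zero] using hv
  have hTv : T v = v := eq_of_norm_le_re_inner_eq_norm_sq (𝕜 := 𝕜)
    (by simpa using T.le_of_opNorm_le hT v) (by simp [← hinner])
  simp [hTv]

theorem orthogonal_ker_one_sub_le_closure_range_one_sub [CompleteSpace E] {T : E →L[𝕜] E}
    (hT : ‖T‖ ≤ 1) :
    (LinearMap.ker ((1 - T : E →L[𝕜] E) : E →ₗ[𝕜] E))ᗮ ≤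
      (LinearMap.range ((1 - T : E →L[𝕜] E) : E →ₗ[𝕜] E)).topologicalClosure := by
  rw [← Submodule.orthogonal_orthogonal_eq_closure]
  exact Submodule.orthogonal_le (orthogonal_range_one_sub_le_ker_one_sub hT)

end InnerProductSpace

end ContinuousLinearMap

open ContinuousLinearMap in
/-- For a non-expansive bounded linear operator `T` on a Hilbert
space `H`, with `Π` the orthogonal projection onto `ker (I - T)`, asymptotic
regularity of `T` is equivalent to norm convergence of `T^k x` to `Π x` for
every `x`. -/
theorem asymptotic_regular_iff_powers_tendsto_orthogonalProjection
    {H : Type*} [NormedAddCommGroup H] [InnerProductSpace ℂ H] [CompleteSpace H]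
    (T : H →L[ℂ] H) (hT : ‖T‖ ≤ 1) :
    (∀ x : H, Tendsto (fun k : ℕ => ‖(T ^ (k + 1)) x - (T ^ k) x‖) atTop (𝓝 0)) ↔
    (∀ x : H, Tendsto (fun k : ℕ => (T ^ k) x) atTop
      (𝓝 ((Submodule.orthogonalProjectionOnto (LinearMap.ker ((1 - T : H →L[ℂ] H) : H →ₗ[ℂ] H)) x : H)))) := by
  set K := LinearMap.ker ((1 - T : H →L[ℂ] H) : H →ₗ[ℂ] H)
  refine ⟨fun hreg x => ?_, fun hconv x => ?_⟩
  · set p : H := (K.orthogonalProjectionOnto x : H)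
    have hfix : ∀ k : ℕ, (T ^ k) p = p :=
      pow_apply_eq_self_of_mem_ker_one_sub (K.orthogonalProjectionOnto x).2
    have hrest : Tendsto (fun k : ℕ => (T ^ k) (x - p)) atTop (𝓝 0) :=
      tendsto_pow_apply_zero_of_mem_closure_range_one_sub hT hreg
        (orthogonal_ker_one_sub_le_closure_range_one_sub hT (K.sub_starProjection_mem_orthogonal x))
    simpa [map_sub, hfix] using hrest.add_const p
  · have hdiff := ((hconv x).comp (tendsto_add_atTop_nat 1)).sub (hconv x)
    simpa using hdiff.norm
end

section
/- Let H be a Hilbert space and T : H → H a bounded linear operator satisfying ‖(I − T)x‖² ≤ ‖x‖² − ‖Tx‖² for all x ∈ H. Then T is asymptotically regular: for every x ∈ H, ‖T^{k+1}x − T^{k}x‖ → 0 as k → ∞. -/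
open Filter Topology

/-! The inequality says that `k ↦ ‖Tᵏ x‖²` is a nonnegative, nonincreasing sequence whose
consecutive drops dominate `‖Tᵏ⁺¹ x - Tᵏ x‖²`. A convergent sequence has drops tending to `0`,
so the steps `Tᵏ⁺¹ x - Tᵏ x` tend to `0`. -/

theorem tendsto_zero_of_le_sub_succ {u f : ℕ → ℝ} (hu : ∀ k, 0 ≤ u k)
    (hf : BddBelow (Set.range f)) (h : ∀ k, u k ≤ f k - f (k + 1)) :
    Tendsto u atTop (𝓝 0) := by
  have hanti : Antitone f := antitone_nat_of_succ_le fun k => by linarith [hu k, h k]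
  have hlim := tendsto_atTop_ciInf hanti hf
  have hdrop : Tendsto (fun k => f k - f (k + 1)) atTop (𝓝 0) := by
    simpa using hlim.sub (hlim.comp (tendsto_add_atTop_nat 1))
  exact squeeze_zero hu h hdrop

theorem tendsto_norm_iterate_succ_sub_of_sq_norm_sub_le {E : Type*} [SeminormedAddCommGroup E]
    {f : E → E} (hf : ∀ x, ‖x - f x‖ ^ 2 ≤ ‖x‖ ^ 2 - ‖f x‖ ^ 2) (x : E) :
    Tendsto (fun k : ℕ => ‖f^[k + 1] x - f^[k] x‖) atTop (𝓝 0) := by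
  have hstep (k : ℕ) : ‖f^[k + 1] x - f^[k] x‖ ^ 2 ≤ ‖f^[k] x‖ ^ 2 - ‖f^[k + 1] x‖ ^ 2 := by
    simpa only [Function.iterate_succ_apply', norm_sub_rev] using hf (f^[k] x)
  have hsq : Tendsto (fun k : ℕ => ‖f^[k + 1] x - f^[k] x‖ ^ 2) atTop (𝓝 0) :=
    tendsto_zero_of_le_sub_succ (fun _ => sq_nonneg _)
      ⟨0, by rintro _ ⟨k, rfl⟩; positivity⟩ hstep
  simpa only [Real.sqrt_zero, Real.sqrt_sq (norm_nonneg _)] using hsq.sqrt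

theorem asymptotically_regular_of_sq_ineq_general
    {H : Type*} [NormedAddCommGroup H] [InnerProductSpace ℂ H]
    (T : H →L[ℂ] H)
    (hT : ∀ x : H, ‖((1 : H →L[ℂ] H) - T) x‖ ^ 2 ≤ ‖x‖ ^ 2 - ‖T x‖ ^ 2) :
    ∀ x : H, Tendsto (fun k : ℕ => ‖(T ^ (k + 1)) x - (T ^ k) x‖) atTop (𝓝 0) := by
  simp only [pow_apply_eq_iterate]
  exact tendsto_norm_iterate_succ_sub_of_sq_norm_sub_le fun x => by simpa using hT x

/-- If a bounded linear operator `T` on a Hilbert space satisfies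
`‖(I - T) x‖² ≤ ‖x‖² - ‖T x‖²` for all `x`, then `T` is asymptotically regular:
`‖T^(k+1) x - T^k x‖ → 0` for every `x`. -/
theorem asymptotically_regular_of_sq_ineq
    {H : Type*} [NormedAddCommGroup H] [InnerProductSpace ℂ H] [CompleteSpace H]
    (T : H →L[ℂ] H)
    (hT : ∀ x : H, ‖((1 : H →L[ℂ] H) - T) x‖ ^ 2 ≤ ‖x‖ ^ 2 - ‖T x‖ ^ 2) :
    ∀ x : H, Tendsto (fun k : ℕ => ‖(T ^ (k + 1)) x - (T ^ k) x‖) atTop (𝓝 0) :=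
  asymptotically_regular_of_sq_ineq_general T hT
end

section
/- Let H be a Hilbert space, T : H → H a non-expansive, asymptotically regular bounded linear operator, and h ∈ H. Suppose φ̄ ∈ H is a fixed point of the affine map S(x) := Tx + h, i.e. φ̄ = Tφ̄ + h. Then for every initial guess φ₀ ∈ H, the iterates φ_k := S^{k}(φ₀) converge in norm to φ̄ + Π(φ₀ − φ̄), where Π is the orthogonal projection onto ker(I − T). -/
/-!
Write `S x = T x + h`. Conjugating by the translation `y ↦ φ̄ + y` turns `S` into `T`, so
`S^k φ₀ = φ̄ + T^k (φ₀ - φ̄)`. Split `φ₀ - φ̄ = p + q` with `p = Π (φ₀ - φ̄)` fixed by `T` and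
`q ⊥ ker (1 - T)`. Since `T` is a contraction, a vector orthogonal to `range (T - 1)` satisfies
`⟪T x, x⟫ = ‖x‖²` and is therefore fixed, so `q ∈ closure (range (T - 1))`. On `range (T - 1)`
asymptotic regularity says exactly `T^k (T z - z) → 0`, and the powers of `T` are equicontinuous,
so `T^k q → 0` on the closure as well.
-/

open Filter Topology

theorem iterate_add_const_apply_eq_add_iterate_sub {G F : Type*} [AddCommGroup G]
    [FunLike F G G] [AddMonoidHomClass F G G] (f : F) {h p : G} (hp : p = f p + h) (x : G)
    (k : ℕ) : (fun y => f y + h)^[k] x = p + f^[k] (x - p) := by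
  have hconj : Function.Semiconj (p + ·) f (fun y => f y + h) := fun y => by
    change p + f y = f (p + y) + h
    rw [map_add]
    nth_rewrite 1 [hp]
    abel
  simpa only [add_sub_cancel] using ((hconj.iterate_right k) (x - p)).symm

theorem isClosed_setOfPred_tendsto_iterate {X : Type*} [PseudoEMetricSpace X]
    {f : X → X} (hf : LipschitzWith 1 f) {l : X → X} (hl : Continuous l) :
    IsClosed {x | Tendsto (f^[·] x) atTop (𝓝 (l x))} :=
  (LipschitzWith.uniformEquicontinuous _ 1 fun k => by simpa using hf.iterate k).equicontinuous
    |>.isClosed_setOfPred_tendsto hl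

namespace ContinuousLinearMap

variable {𝕜 E : Type*}

section Normed

variable [NontriviallyNormedField 𝕜] [NormedAddCommGroup E] [NormedSpace 𝕜 E]

theorem tendsto_pow_apply_zero_of_mem_closure_range_sub_one (f : E →L[𝕜] E) (hf : ‖f‖ ≤ 1)
    (hreg : ∀ x, Tendsto (fun k : ℕ => (f ^ (k + 1)) x - (f ^ k) x) atTop (𝓝 0)) {y : E}
    (hy : y ∈ closure (LinearMap.range ((f - 1 : E →L[𝕜] E) : E →ₗ[𝕜] E))) :
    Tendsto (fun k : ℕ => (f ^ k) y) atTop (𝓝 0) := by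
  have hclosed : IsClosed {x : E | Tendsto (fun k : ℕ => (f ^ k) x) atTop (𝓝 0)} := by
    simpa only [FunLike.coe_pow_eq_iterate] using
      isClosed_setOfPred_tendsto_iterate (f.lipschitz.weaken hf) continuous_const
  refine closure_minimal ?_ hclosed hy
  rintro _ ⟨z, rfl⟩
  have hpow : ∀ k : ℕ, (f ^ k) ((f - 1 : E →L[𝕜] E) z) = (f ^ (k + 1)) z - (f ^ k) z :=
    fun k => by rw [sub_apply, map_sub, pow_succ]; rfl
  simpa only [Set.mem_ofPred_eq, coe_coe, hpow] using hreg z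

end Normed

section InnerProduct

variable [RCLike 𝕜] [NormedAddCommGroup E] [InnerProductSpace 𝕜 E]

theorem orthogonal_range_sub_one_le_ker_one_sub (f : E →L[𝕜] E) (hf : ‖f‖ ≤ 1) :
    (LinearMap.range ((f - 1 : E →L[𝕜] E) : E →ₗ[𝕜] E))ᗮ ≤
      LinearMap.ker ((1 - f : E →L[𝕜] E) : E →ₗ[𝕜] E) := by
  intro x hx
  have hinner : ∀ y, inner 𝕜 (f y) x = inner 𝕜 y x := by
    simpa [Submodule.mem_orthogonal, inner_sub_left, sub_eq_zero] using hx
  have hfx : f x = x := eq_of_norm_le_re_inner_eq_norm_sq (𝕜 := 𝕜)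
    (by simpa using f.le_of_opNorm_le hf x) (by simp [hinner])
  simp [hfx]

theorem tendsto_pow_apply_orthogonalProjection [CompleteSpace E] (f : E →L[𝕜] E) (hf : ‖f‖ ≤ 1)
    (hreg : ∀ x, Tendsto (fun k : ℕ => (f ^ (k + 1)) x - (f ^ k) x) atTop (𝓝 0)) (x : E) :
    Tendsto (fun k : ℕ => (f ^ k) x) atTop
      (𝓝 (Submodule.orthogonalProjectionOnto
        (LinearMap.ker ((1 - f : E →L[𝕜] E) : E →ₗ[𝕜] E)) x : E)) := by
  set K := LinearMap.ker ((1 - f : E →L[𝕜] E) : E →ₗ[𝕜] E)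
  set p : E := (K.orthogonalProjectionOnto x : E)
  have hp : ∀ k : ℕ, (f ^ k) p = p := by
    have hmem : p ∈ K := (K.orthogonalProjectionOnto x).2
    have hfp : p - f p = 0 := by simpa [K] using hmem
    intro k
    rw [FunLike.coe_pow_eq_iterate]
    exact Function.iterate_fixed (sub_eq_zero.1 hfp).symm k
  have hq : x - p ∈ closure (LinearMap.range ((f - 1 : E →L[𝕜] E) : E →ₗ[𝕜] E)) := by
    rw [← Submodule.topologicalClosure_coe, ← Submodule.orthogonal_orthogonal_eq_closure]
    exact Submodule.orthogonal_le (f.orthogonal_range_sub_one_le_ker_one_sub hf)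
      (K.sub_starProjection_mem_orthogonal x)
  simpa only [map_sub, hp, sub_add_cancel, zero_add] using
    (f.tendsto_pow_apply_zero_of_mem_closure_range_sub_one hf hreg hq).add_const p

end InnerProduct

end ContinuousLinearMap

/-- Let `T` be a non-expansive, asymptotically regular bounded
linear operator on a Hilbert space `H`, `h ∈ H`, and let `φ̄` be a fixed point
of the affine map `S x = T x + h`. Then for every `φ₀`, the iterates
`S^[k] φ₀` converge in norm to `φ̄ + Π (φ₀ - φ̄)`, where `Π` is the orthogonal
projection onto `ker (I - T)`. -/
theorem affine_iterates_tendsto_of_fixedPoint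
    {H : Type*} [NormedAddCommGroup H] [InnerProductSpace ℂ H] [CompleteSpace H]
    (T : H →L[ℂ] H) (hT : ‖T‖ ≤ 1)
    (hreg : ∀ x : H, Tendsto (fun k : ℕ => ‖(T ^ (k + 1)) x - (T ^ k) x‖) atTop (𝓝 0))
    (h : H) (φbar : H) (hfix : φbar = T φbar + h) (φ₀ : H) :
    Tendsto (fun k : ℕ => (fun x => T x + h)^[k] φ₀) atTop
      (𝓝 (φbar + (Submodule.orthogonalProjectionOnto (LinearMap.ker ((1 - T : H →L[ℂ] H) : H →ₗ[ℂ] H)) (φ₀ - φbar) : H))) := by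
  simp only [iterate_add_const_apply_eq_add_iterate_sub T hfix, ← FunLike.coe_pow_eq_iterate]
  exact tendsto_const_nhds.add <| T.tendsto_pow_apply_orthogonalProjection hT
    (fun x => tendsto_zero_iff_norm_tendsto_zero.2 (hreg x)) (φ₀ - φbar)
end

section
/- Let H be a Hilbert space, T : H → H a non-expansive, asymptotically regular bounded linear operator such that 1 is not an eigenvalue of T (i.e. ker(I − T) = {0}), and let h ∈ H. If the affine map S(x) := Tx + h has a fixed point φ̄ ∈ H, then for every initial guess φ₀ ∈ H the iterates φ_k := S^{k}(φ₀) converge in norm to φ̄. -/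
/-! Since `φ̄` is a fixed point, `S^[k] φ₀ = T^k (φ₀ - φ̄) + φ̄`, so it suffices that `T^k x → 0` for
every `x`. The powers of `T` are uniformly bounded, so the set of `x` where this holds is closed;
it contains the range of `1 - T` by asymptotic regularity, and that range is dense because its
orthogonal complement `ker (1 - T†)` equals `ker (1 - T) = 0`: a contraction and its adjoint have
the same fixed vectors. -/

open Filter Topology

namespace ContinuousLinearMap

section Normed

variable {𝕜 E : Type*} [NontriviallyNormedField 𝕜] [SeminormedAddCommGroup E] [NormedSpace 𝕜 E]
  {T : E →L[𝕜] E}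

theorem norm_pow_apply_le_of_norm_le_one (hT : ‖T‖ ≤ 1) (k : ℕ) (x : E) : ‖(T ^ k) x‖ ≤ ‖x‖ := by
  induction k generalizing x with
  | zero => simp
  | succ k ih =>
    rw [pow_succ]
    exact (ih (T x)).trans (by simpa using T.le_of_opNorm_le hT x)

theorem tendsto_pow_apply_zero_of_dense (hT : ‖T‖ ≤ 1) {s : Set E} (hs : Dense s)
    (h : ∀ y ∈ s, Tendsto (fun k ↦ (T ^ k) y) atTop (𝓝 0)) (x : E) :
    Tendsto (fun k ↦ (T ^ k) x) atTop (𝓝 0) := by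
  have hbound : ∃ C, ∀ (k : ℕ) (x : E), ‖(T ^ k) x‖ ≤ C * ‖x‖ :=
    ⟨1, fun k x ↦ by simpa using norm_pow_apply_le_of_norm_le_one hT k x⟩
  have hequi := ((NormedSpace.equicontinuous_TFAE fun k : ℕ ↦ T ^ k).out 3 1).mp hbound
  exact (hequi.isClosed_setOfPred_tendsto continuous_const).closure_subset_iff.mpr h (hs x)

theorem tendsto_pow_apply_one_sub_apply {z : E}
    (hz : Tendsto (fun k ↦ ‖(T ^ (k + 1)) z - (T ^ k) z‖) atTop (𝓝 0)) :
    Tendsto (fun k ↦ (T ^ k) ((1 - T) z)) atTop (𝓝 0) := by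
  rw [tendsto_zero_iff_norm_tendsto_zero]
  convert hz using 2 with k
  rw [pow_succ, sub_apply, one_apply_eq_self, map_sub, norm_sub_rev]
  rfl

end Normed

section Inner

variable {𝕜 E : Type*} [RCLike 𝕜] [NormedAddCommGroup E] [InnerProductSpace 𝕜 E] [CompleteSpace E]
  {T : E →L[𝕜] E}

theorem apply_eq_self_of_adjoint_apply_eq_self (hT : ‖T‖ ≤ 1) {v : E} (hv : adjoint T v = v) :
    T v = v := by
  have hre : RCLike.re (inner 𝕜 (T v) v) = ‖v‖ ^ 2 := by
    rw [← adjoint_inner_right, hv, inner_self_eq_norm_sq]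
  have hTv : ‖T v‖ ≤ ‖v‖ := by simpa using T.le_of_opNorm_le hT v
  have hsq : ‖T v - v‖ ^ 2 ≤ 0 := by
    rw [norm_sub_sq (𝕜 := 𝕜), hre]
    nlinarith [norm_nonneg (T v)]
  rw [← sub_eq_zero, ← norm_eq_zero]
  nlinarith [norm_nonneg (T v - v)]

theorem dense_range_one_sub (hT : ‖T‖ ≤ 1)
    (hker : LinearMap.ker ((1 - T : E →L[𝕜] E) : E →ₗ[𝕜] E) = ⊥) :
    Dense (LinearMap.range ((1 - T : E →L[𝕜] E) : E →ₗ[𝕜] E) : Set E) := by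
  rw [Submodule.dense_iff_topologicalClosure_eq_top, Submodule.topologicalClosure_eq_top_iff,
    orthogonal_range, eq_bot_iff, ← hker]
  intro v hv
  have hv' : v = adjoint T v := by simpa [adjoint_one, sub_eq_zero] using LinearMap.mem_ker.mp hv
  simp [apply_eq_self_of_adjoint_apply_eq_self hT hv'.symm]

theorem tendsto_pow_apply_zero (hT : ‖T‖ ≤ 1)
    (hreg : ∀ x : E, Tendsto (fun k ↦ ‖(T ^ (k + 1)) x - (T ^ k) x‖) atTop (𝓝 0))
    (hker : LinearMap.ker ((1 - T : E →L[𝕜] E) : E →ₗ[𝕜] E) = ⊥) (x : E) :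
    Tendsto (fun k ↦ (T ^ k) x) atTop (𝓝 0) :=
  tendsto_pow_apply_zero_of_dense hT (dense_range_one_sub hT hker)
    (fun _ ⟨z, hz⟩ ↦ hz ▸ tendsto_pow_apply_one_sub_apply (hreg z)) x

end Inner

theorem iterate_add_const_apply {R M : Type*} [Semiring R] [TopologicalSpace M] [AddCommGroup M]
    [Module R M] (T : M →L[R] M) {h p : M} (hp : p = T p + h) (k : ℕ) (x : M) :
    (fun y ↦ T y + h)^[k] x = (T ^ k) (x - p) + p := by
  have hconj : Function.Semiconj (· + p) T (fun y ↦ T y + h) := fun y ↦ by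
    simp only [map_add]; rw [add_assoc, ← hp]
  simpa using (hconj.iterate_right k (x - p)).symm

end ContinuousLinearMap

/-- Let `T` be a non-expansive, asymptotically regular bounded
linear operator on a Hilbert space `H` such that `1` is not an eigenvalue of
`T` (i.e. `ker (I - T) = {0}`), and `h ∈ H`. If the affine map `S x = T x + h`
has a fixed point `φ̄`, then for every `φ₀` the iterates `S^[k] φ₀` converge in
norm to `φ̄`. -/
theorem affine_iterates_tendsto_fixedPoint_of_ker_eq_bot
    {H : Type*} [NormedAddCommGroup H] [InnerProductSpace ℂ H] [CompleteSpace H]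
    (T : H →L[ℂ] H) (hT : ‖T‖ ≤ 1)
    (hreg : ∀ x : H, Tendsto (fun k : ℕ => ‖(T ^ (k + 1)) x - (T ^ k) x‖) atTop (𝓝 0))
    (hker : LinearMap.ker (((1 : H →L[ℂ] H) - T) : H →ₗ[ℂ] H) = ⊥)
    (h : H) (φbar : H) (hfix : φbar = T φbar + h) (φ₀ : H) :
    Tendsto (fun k : ℕ => (fun x => T x + h)^[k] φ₀) atTop (𝓝 φbar) := by
  simp only [T.iterate_add_const_apply hfix]
  simpa using (T.tendsto_pow_apply_zero hT hreg hker (φ₀ - φbar)).add_const φbar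
end

section
/- Let H be a complex Hilbert space, A : H → H a self-adjoint bounded linear operator, and let T > 0. Assume that for every integer k, the number kπ/T is not an eigenvalue of A. Define C := f(A) by the continuous functional calculus applied to f(λ) = cos(λ T)². Then 1 is not an eigenvalue of C, i.e. the only x ∈ H with Cx = x is x = 0. -/
/-!
Since `sin² = 1 - cos²`, the hypothesis says `sin (A T)² x = 0`. Take the polynomial
`p t = ∏_{|k| ≤ N} (t - kπ/T)`, with `N` so large that for every point of the spectrum of `A`
the nearest zero of `t ↦ sin (t T)` is a root of `p`. From `|sin θ| ≥ (2/π) dist(θ, πℤ)` we get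
`p² ≤ M sin(· T)²` on the spectrum, hence `‖p(A) x‖² ≤ M ⟪x, sin (A T)² x⟫ = 0`.
As `p(A)` is a product of the injective operators `A - kπ/T`, this forces `x = 0`.
-/

open Real Finset
open scoped ComplexInnerProductSpace

lemma mul_abs_sub_round_mul_pi_le_abs_sin (θ : ℝ) :
    2 / π * |θ - round (θ / π) * π| ≤ |sin θ| := by
  have hround : |θ - round (θ / π) * π| ≤ π / 2 := by
    have := abs_sub_round (θ / π)
    rw [show θ - round (θ / π) * π = (θ / π - round (θ / π)) * π by field_simp,
      abs_mul, abs_of_pos pi_pos]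
    nlinarith [pi_pos]
  calc 2 / π * |θ - round (θ / π) * π| ≤ |sin (θ - round (θ / π) * π)| :=
        mul_abs_le_abs_sin hround
    _ = |sin θ| := by rw [sin_sub_int_mul_pi, abs_mul, abs_neg_one_zpow, one_mul]

lemma round_mem_Icc_of_abs_add_half_le {x : ℝ} {N : ℕ} (h : |x| + 1 / 2 ≤ N) :
    round x ∈ Icc (-(N : ℤ)) N := by
  have hx := abs_sub_round x
  have : |(round x : ℝ)| ≤ N := by
    calc |(round x : ℝ)| ≤ |x| + |x - round x| := by
          simpa using abs_sub x (x - round x)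
      _ ≤ N := by linarith
  rw [mem_Icc, ← abs_le]
  exact_mod_cast this

lemma abs_prod_sub_le_mul_abs_sub {ι : Type*} [DecidableEq ι] (s : Finset ι) (μ : ι → ℝ)
    {k : ι} (hk : k ∈ s) {R t : ℝ} (ht : |t| ≤ R) :
    |∏ i ∈ s, (t - μ i)| ≤ (∏ i ∈ s, (1 + R + |μ i|)) * |t - μ k| := by
  have hfactor : ∀ i, |t - μ i| ≤ 1 + R + |μ i| := fun i => by
    linarith [abs_sub t (μ i)]
  have hone : ∀ i, 1 ≤ 1 + R + |μ i| := fun i => by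
    linarith [abs_nonneg t, abs_nonneg (μ i)]
  rw [← mul_prod_erase s _ hk, abs_mul, abs_prod, mul_comm]
  gcongr
  calc ∏ i ∈ s.erase k, |t - μ i| ≤ ∏ i ∈ s.erase k, (1 + R + |μ i|) :=
        prod_le_prod (fun i _ => abs_nonneg _) (fun i _ => hfactor i)
    _ ≤ ∏ i ∈ s, (1 + R + |μ i|) :=
        prod_le_prod_of_subset_of_one_le (erase_subset k s)
          (fun i _ => zero_le_one.trans (hone i)) (fun i _ _ => hone i)

lemma sq_prod_sub_le_mul_sin_sq {T R : ℝ} (hT : 0 < T) {N : ℕ} (hN : R * T / π + 1 / 2 ≤ N)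
    {t : ℝ} (ht : |t| ≤ R) :
    (∏ k ∈ Icc (-(N : ℤ)) N, (t - k * π / T)) ^ 2 ≤
      ((∏ k ∈ Icc (-(N : ℤ)) N, (1 + R + |k * π / T|)) * (π / (2 * T))) ^ 2 *
        sin (t * T) ^ 2 := by
  set k := round (t * T / π)
  have hk : k ∈ Icc (-(N : ℤ)) N := by
    refine round_mem_Icc_of_abs_add_half_le (le_trans ?_ hN)
    rw [abs_div, abs_mul, abs_of_pos hT, abs_of_pos pi_pos]
    gcongr
  have hnear : |t - k * π / T| ≤ π / (2 * T) * |sin (t * T)| := by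
    have hsin := mul_abs_sub_round_mul_pi_le_abs_sin (t * T)
    rw [show t - k * π / T = (t * T - k * π) / T by field_simp, abs_div, abs_of_pos hT]
    calc |t * T - k * π| / T = π / (2 * T) * (2 / π * |t * T - k * π|) := by
          field_simp
      _ ≤ π / (2 * T) * |sin (t * T)| := by gcongr
  have hB : 0 ≤ ∏ k ∈ Icc (-(N : ℤ)) N, (1 + R + |k * π / T|) := by
    have hR : 0 ≤ R := (abs_nonneg t).trans ht
    positivity
  rw [← mul_pow, sq_le_sq, mul_assoc, abs_mul, abs_mul, abs_of_nonneg hB,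
    abs_of_pos (by positivity : 0 < π / (2 * T))]
  calc _ ≤ _ * |t - k * π / T| := abs_prod_sub_le_mul_abs_sub _ _ hk ht
    _ ≤ _ := by gcongr

section SelfAdjoint

variable {H : Type*} [NormedAddCommGroup H] [InnerProductSpace ℂ H] [CompleteSpace H]
  {A : H →L[ℂ] H}

lemma cfc_apply_eq_zero_of_sq_le_mul (hA : IsSelfAdjoint A) {f u : ℝ → ℝ}
    (hf : ContinuousOn f (spectrum ℝ A)) (hu : ContinuousOn u (spectrum ℝ A)) {M : ℝ}
    (hle : ∀ t ∈ spectrum ℝ A, u t ^ 2 ≤ M * f t) {x : H} (hx : cfc f A x = 0) :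
    cfc u A x = 0 := by
  set B := cfc u A
  have hpos : (M • cfc f A - B * B).IsPositive := by
    have hcfc : cfc (fun t => M * f t - u t ^ 2) A = M • cfc f A - B * B := by
      rw [cfc_sub _ _ A, cfc_const_mul M f A, cfc_pow u 2 A, sq]
    rw [← ContinuousLinearMap.nonneg_iff_isPositive, ← hcfc]
    exact cfc_nonneg fun t ht => sub_nonneg.2 (hle t ht)
  have hB : IsSelfAdjoint B := cfc_predicate u A
  have hinner : RCLike.re ⟪x, B (B x)⟫ = ‖B x‖ ^ 2 := by
    rw [show ⟪x, B (B x)⟫ = ⟪B x, B x⟫ from (hB.isSymmetric x (B x)).symm]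
    exact inner_self_eq_norm_sq (B x)
  have key := hpos.re_inner_nonneg_right x
  simp only [sub_apply, smul_apply, hx, smul_zero, zero_sub, mul_apply_eq_comp,
    inner_neg_right, map_neg, hinner] at key
  simpa using (by nlinarith [norm_nonneg (B x)] : ‖B x‖ = 0)

lemma eq_zero_of_cfc_prod_sub_apply_eq_zero (hA : IsSelfAdjoint A) {ι : Type*} (s : Finset ι)
    (μ : ι → ℝ) (hμ : ∀ i ∈ s, ∀ y : H, A y = (μ i : ℂ) • y → y = 0) {x : H}
    (hx : cfc (fun t => ∏ i ∈ s, (t - μ i)) A x = 0) : x = 0 := by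
  classical
  induction s using Finset.induction_on generalizing x with
  | empty => simpa [cfc_const_one ℝ A] using hx
  | insert a s ha ih =>
    have hfactor : cfc (fun t => ∏ i ∈ insert a s, (t - μ i)) A
        = (A - algebraMap ℝ _ (μ a)) * cfc (fun t => ∏ i ∈ s, (t - μ i)) A := by
      simp only [prod_insert ha]
      rw [cfc_mul (fun t => t - μ a) _ A, cfc_sub _ _ A, cfc_id' ℝ A, cfc_const (μ a) A]
    rw [hfactor, mul_apply_eq_comp, sub_apply, ContinuousLinearMap.algebraMap_apply,
      sub_eq_zero, ← Complex.coe_smul] at hx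
    exact ih (fun i hi => hμ i (mem_insert_of_mem hi)) (hμ a (mem_insert_self a s) _ hx)

end SelfAdjoint

/-- Let `A` be a self-adjoint bounded operator on a complex
Hilbert space, `T > 0`, and assume that for every integer `k`, the number
`kπ/T` is not an eigenvalue of `A`. Then `1` is not an eigenvalue of
`C = cos(AT)²` (continuous functional calculus applied to `λ ↦ cos(λT)²`):
the only `x` with `C x = x` is `x = 0`. -/
theorem one_not_eigenvalue_cos_sq_cfc
    {H : Type*} [NormedAddCommGroup H] [InnerProductSpace ℂ H] [CompleteSpace H]
    (A : H →L[ℂ] H) (hA : IsSelfAdjoint A) (T : ℝ) (hT : 0 < T)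
    (heig : ∀ k : ℤ, ∀ x : H, A x = ((((k : ℝ) * Real.pi / T : ℝ) : ℂ)) • x → x = 0) :
    ∀ x : H, (cfc (fun lam : ℝ => Real.cos (lam * T) ^ 2) A) x = x → x = 0 := by
  intro x hx
  nontriviality H
  have hsin : cfc (fun t => sin (t * T) ^ 2) A x = 0 := by
    rw [cfc_congr fun t _ => sin_sq (t * T),
      cfc_sub (fun _ => 1) (fun t => cos (t * T) ^ 2) A (by fun_prop) (by fun_prop),
      cfc_const_one ℝ A, sub_apply, hx, one_apply_eq_self, sub_self]
  obtain ⟨N, hN⟩ := exists_nat_ge (‖A‖ * T / π + 1 / 2)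
  have hprod : cfc (fun t => ∏ k ∈ Icc (-(N : ℤ)) N, (t - k * π / T)) A x = 0 :=
    cfc_apply_eq_zero_of_sq_le_mul hA (by fun_prop) (by fun_prop)
      (fun t ht => sq_prod_sub_le_mul_sin_sq hT hN
        (by simpa using spectrum.norm_le_norm_of_mem ht)) hsin
  exact eq_zero_of_cfc_prod_sub_apply_eq_zero hA _ _ (fun k _ => heig k) hprod
end
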